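/- arXiv:1906.04133 — 7 statements merged into one kernel-verified Lean document; each statement's English description precedes it below -/
import Mathlib

section
/- For independent Bernoulli random variables b_1,...,b_n with parameters p_1,...,p_n, vectors x_1,...,x_n in R^d, and a positive semidefinite d×d matrix A, the expectation of det(∑_i b_i x_i x_iᵀ + A) equals det(∑_i p_i x_i x_iᵀ + A). -/
/-!
`t ↦ det (M + t • u vᵀ)` is affine in `t`, so `F t := det (∑ i, t i • x i x iᵀ + A)` is affine in
each coordinate separately. For such a function, averaging over independent Bernoulli `b i`
one coordinate at a time replaces each `b i` by its mean `p i`, so `𝔼 F(b) = F(p)`.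
-/

open Matrix BigOperators

section
variable {m R : Type*} [Fintype m] [DecidableEq m] [CommRing R]

theorem det_add_smul_vecMulVec (M : Matrix m m R) (u v : m → R) (t : R) :
    (M + t • vecMulVec u v).det = (1 - t) * M.det + t * (M + vecMulVec u v).det := by
  -- By the Schur complement, `M + t • u vᵀ` has the determinant of a bordered matrix in which
  -- `t` occurs only in the border row, where the determinant is linear.
  let B : (Unit ⊕ m → R) → Matrix (Unit ⊕ m) (Unit ⊕ m) R := fun r =>
    (fromBlocks 1 0 (replicateCol Unit (-u)) M).updateRow (Sum.inl ()) r
  have affine : ∀ t : R, (M + t • vecMulVec u v).det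
      = (B (Sum.elim (1 : Unit → R) 0)).det + t * (B (Sum.elim (0 : Unit → R) v)).det := by
    intro t
    calc (M + t • vecMulVec u v).det
        = (fromBlocks 1 (replicateRow Unit (t • v)) (replicateCol Unit (-u)) M).det := by
          rw [det_fromBlocks_one₁₁, vecMulVec_eq Unit]
          congr 1
          ext i j
          simp [Matrix.mul_apply]
      _ = (B (Sum.elim (1 : Unit → R) 0 + t • Sum.elim (0 : Unit → R) v)).det := by
          congr 1
          ext (_ | i) (_ | j) <;> simp [B, updateRow_apply]
      _ = _ := by rw [det_updateRow_add, det_updateRow_smul]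
  have at_zero := affine 0
  have at_one := affine 1
  rw [zero_smul, add_zero, zero_mul, add_zero] at at_zero
  rw [one_smul, one_mul] at at_one
  rw [affine t, at_zero, at_one]
  ring

theorem det_sum_update_smul_vecMulVec_add {ι : Type*} [Fintype ι] [DecidableEq ι]
    (u v : ι → m → R) (A : Matrix m m R) (t : ι → R) (i : ι) (s : R) :
    (∑ j, Function.update t i s j • vecMulVec (u j) (v j) + A).det
      = (1 - s) * (∑ j, Function.update t i 0 j • vecMulVec (u j) (v j) + A).det
        + s * (∑ j, Function.update t i 1 j • vecMulVec (u j) (v j) + A).det := by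
  have split : ∀ s : R, ∑ j, Function.update t i s j • vecMulVec (u j) (v j) + A
      = (∑ j, Function.update t i 0 j • vecMulVec (u j) (v j) + A)
        + s • vecMulVec (u i) (v i) := by
    intro s
    have hupd : Function.update t i s = Function.update t i 0 + Pi.single i s := by
      funext j; by_cases h : j = i <;> simp [h]
    simp only [hupd, Pi.add_apply, add_smul, Finset.sum_add_distrib, Pi.single_apply, ite_smul,
      zero_smul, Finset.sum_ite_eq', Finset.mem_univ, if_true]
    abel
  rw [split s, split 1, one_smul, det_add_smul_vecMulVec]

end

theorem bernoulli_expectation_eq_of_multiaffine {R : Type*} [CommRing R] {n : ℕ}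
    (f : (Fin n → R) → R)
    (hf : ∀ t i s, f (Function.update t i s)
      = (1 - s) * f (Function.update t i 0) + s * f (Function.update t i 1))
    (p : Fin n → R) :
    ∑ b : Fin n → Bool, (∏ i, if b i then p i else 1 - p i) * f (fun i => if b i then 1 else 0)
      = f p := by
  induction n with
  | zero => simp [Subsingleton.elim _ p]
  | succ n ih =>
    have indicator_cons : ∀ (c : Bool) (b : Fin n → Bool),
        (fun i => if (Fin.cons c b : Fin (n + 1) → Bool) i then (1 : R) else 0)
          = Fin.cons (if c then 1 else 0) (fun i => if b i then 1 else 0) := by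
      intro c b; ext i; cases i using Fin.cases <;> simp
    have average_tail : ∀ a : R, ∑ b : Fin n → Bool, (∏ i, if b i then p i.succ else 1 - p i.succ)
        * f (Fin.cons a fun i => if b i then 1 else 0) = f (Fin.cons a (Fin.tail p)) := fun a =>
      ih (fun t => f (Fin.cons a t))
        (fun t i s => by simpa only [← Fin.cons_update] using hf (Fin.cons a t) i.succ s)
        (Fin.tail p)
    calc _ = ∑ c : Bool, (if c then p 0 else 1 - p 0) * ∑ b : Fin n → Bool,
            (∏ i, if b i then p i.succ else 1 - p i.succ)
              * f (Fin.cons (if c then 1 else 0) fun i => if b i then 1 else 0) := by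
          rw [← (Fin.consEquiv fun _ => Bool).sum_comp, Fintype.sum_prod_type]
          simp only [Fin.consEquiv_apply, Fin.prod_univ_succ, Fin.cons_zero, Fin.cons_succ,
            indicator_cons, Finset.mul_sum, mul_assoc]
      _ = (1 - p 0) * f (Fin.cons 0 (Fin.tail p)) + p 0 * f (Fin.cons 1 (Fin.tail p)) := by
          simp only [average_tail, Fintype.sum_bool, if_true, Bool.false_eq_true, if_false]
          ring
      _ = f p := by
          conv_rhs => rw [← Fin.cons_self_tail p, ← Fin.update_cons_zero 0, hf,
            Fin.update_cons_zero, Fin.update_cons_zero]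

theorem bernoulli_expectation_det_general
    (n d : ℕ) (x : Fin n → (Fin d → ℝ)) (p : Fin n → ℝ)
    (A : Matrix (Fin d) (Fin d) ℝ) :
    ∑ b : Fin n → Bool,
        (∏ i, (if b i then p i else 1 - p i)) *
          (∑ i, (if b i then (1 : ℝ) else 0) • vecMulVec (x i) (x i) + A).det
      = (∑ i, p i • vecMulVec (x i) (x i) + A).det :=
  bernoulli_expectation_eq_of_multiaffine (fun t => (∑ i, t i • vecMulVec (x i) (x i) + A).det)
    (det_sum_update_smul_vecMulVec_add x x A) p

/-- Expectation over independent Bernoulli variables `b i ∈ {0,1}` (with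
`P(b i = 1) = p i`) of `det (∑ i, b i • x i x iᵀ + A)` equals
`det (∑ i, p i • x i x iᵀ + A)`. The expectation is written out as the
weighted sum over all outcomes `b : Fin n → Bool`. -/
theorem bernoulli_expectation_det
    (n d : ℕ) (x : Fin n → (Fin d → ℝ)) (p : Fin n → ℝ)
    (hp : ∀ i, p i ∈ Set.Icc (0 : ℝ) 1)
    (A : Matrix (Fin d) (Fin d) ℝ) (hA : A.PosSemidef) :
    ∑ b : Fin n → Bool,
        (∏ i, (if b i then p i else 1 - p i)) *
          (∑ i, (if b i then (1 : ℝ) else 0) • vecMulVec (x i) (x i) + A).det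
      = (∑ i, p i • vecMulVec (x i) (x i) + A).det :=
  bernoulli_expectation_det_general n d x p A
end

section
/- If A is an invertible positive definite d×d matrix and D_p has diagonal entries p_i ∈ [0,1) (all strictly less than 1), then for every subset S ⊆ [n], det(X_Sᵀ X_S + A) · ∏_{i∈S} p_i · ∏_{i∉S}(1−p_i) = det(A) · ∏_{i=1}^n (1−p_i) · det(L_{S,S}), where L = D̃ + D̃^{1/2} X A^{-1} Xᵀ D̃^{1/2} and D̃ = D_p (I − D_p)^{-1}. In other words, the regularized DPP equals the L-ensemble DPP with kernel L. -/
open Matrix BigOperators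

/-- The regularized DPP equals the L-ensemble DPP with kernel
`L = D̃ + D̃^{1/2} X A⁻¹ Xᵀ D̃^{1/2}`, `D̃ = D_p (I - D_p)⁻¹`: for every subset `S`,
`det(X_Sᵀ X_S + A) ∏_{i∈S} p i ∏_{i∉S} (1 - p i) = det A ∏ i (1 - p i) · det L_{S,S}`. -/
theorem regularized_dpp_is_ensemble
    (n d : ℕ) (X : Matrix (Fin n) (Fin d) ℝ) (p : Fin n → ℝ)
    (hp : ∀ i, p i ∈ Set.Ico (0 : ℝ) 1)
    (A : Matrix (Fin d) (Fin d) ℝ) (hA : A.PosDef)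
    (L : Matrix (Fin n) (Fin n) ℝ)
    (hL : L = Matrix.diagonal (fun i => p i / (1 - p i)) +
        Matrix.diagonal (fun i => Real.sqrt (p i / (1 - p i))) * X * A⁻¹ * Xᵀ *
          Matrix.diagonal (fun i => Real.sqrt (p i / (1 - p i))))
    (S : Finset (Fin n)) :
    ((∑ i ∈ S, vecMulVec (X i) (X i)) + A).det *
        ((∏ i ∈ S, p i) * ∏ i ∈ Sᶜ, (1 - p i))
      = A.det * (∏ i, (1 - p i)) *
          (L.submatrix (Subtype.val : {i // i ∈ S} → Fin n)
            (Subtype.val : {i // i ∈ S} → Fin n)).det := by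
  have hone : ∀ i, (0:ℝ) < 1 - p i := fun i => by linarith [(hp i).2]
  have hgnn : ∀ i, (0:ℝ) ≤ p i / (1 - p i) :=
    fun i => div_nonneg (hp i).1 (hone i).le
  set Xs : Matrix {i // i ∈ S} (Fin d) ℝ := X.submatrix Subtype.val id with hXs
  -- the sum of outer products is XsᵀXs
  have hsum : (∑ i ∈ S, vecMulVec (X i) (X i)) = Xsᵀ * Xs := by
    ext j k
    simp only [Matrix.sum_apply, vecMulVec_apply, Matrix.mul_apply,
      Matrix.transpose_apply, hXs, Matrix.submatrix_apply, id]
    exact (Finset.sum_coe_sort S (fun i => X i j * X i k)).symm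
  have hB : Xs * A⁻¹ * Xsᵀ
      = (X * A⁻¹ * Xᵀ).submatrix (Subtype.val : {i // i ∈ S} → Fin n) Subtype.val := by
    ext i j
    simp [hXs, Matrix.mul_apply]
  -- the submatrix of L
  have hLsub : L.submatrix (Subtype.val : {i // i ∈ S} → Fin n) Subtype.val
      = diagonal (fun i : {i // i ∈ S} => Real.sqrt (p i.val / (1 - p i.val))) *
        ((1 : Matrix {i // i ∈ S} {i // i ∈ S} ℝ) + Xs * A⁻¹ * Xsᵀ) *
        diagonal (fun i : {i // i ∈ S} => Real.sqrt (p i.val / (1 - p i.val))) := by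
    subst hL
    have h2 : Matrix.diagonal (fun i => Real.sqrt (p i / (1 - p i))) * X * A⁻¹ * Xᵀ *
          Matrix.diagonal (fun i => Real.sqrt (p i / (1 - p i)))
        = Matrix.diagonal (fun i => Real.sqrt (p i / (1 - p i))) * (X * A⁻¹ * Xᵀ) *
          Matrix.diagonal (fun i => Real.sqrt (p i / (1 - p i))) := by
      simp only [Matrix.mul_assoc]
    rw [h2, hB]
    ext i j
    simp only [Matrix.submatrix_apply, Matrix.add_apply, Matrix.mul_diagonal,
      Matrix.diagonal_mul, Matrix.one_apply, Matrix.diagonal_apply]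
    by_cases h : i = j
    · subst h
      have h' : (i : Fin n) = (i : Fin n) := rfl
      rw [if_pos rfl, if_pos rfl]
      have hsq : Real.sqrt (p i.val / (1 - p i.val)) * Real.sqrt (p i.val / (1 - p i.val))
          = p i.val / (1 - p i.val) := Real.mul_self_sqrt (hgnn i.val)
      linear_combination (-(1:ℝ)) * hsq
    · have h' : (i : Fin n) ≠ (j : Fin n) := fun hc => h (Subtype.ext hc)
      rw [if_neg h', if_neg h]
      ring
  rw [hsum, hLsub]
  -- determinant computations
  have hdetA : IsUnit A.det := isUnit_iff_ne_zero.mpr (ne_of_gt hA.det_pos)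
  have hdet1 : ((1 : Matrix {i // i ∈ S} {i // i ∈ S} ℝ) + Xs * A⁻¹ * Xsᵀ).det
      = ((1 : Matrix (Fin d) (Fin d) ℝ) + A⁻¹ * (Xsᵀ * Xs)).det := by
    rw [Matrix.mul_assoc, Matrix.det_one_add_mul_comm, Matrix.mul_assoc, ← Matrix.mul_assoc]
  have hdet2 : A.det * ((1 : Matrix (Fin d) (Fin d) ℝ) + A⁻¹ * (Xsᵀ * Xs)).det
      = (Xsᵀ * Xs + A).det := by
    rw [← Matrix.det_mul, Matrix.mul_add, Matrix.mul_one,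
      Matrix.mul_nonsing_inv_cancel_left _ _ hdetA, add_comm]
  rw [Matrix.det_mul, Matrix.det_mul, Matrix.det_diagonal, hdet1]
  have hsqrt : (∏ i : {i // i ∈ S}, Real.sqrt (p i.val / (1 - p i.val))) *
      (∏ i : {i // i ∈ S}, Real.sqrt (p i.val / (1 - p i.val)))
      = ∏ i ∈ S, p i / (1 - p i) := by
    rw [← Finset.prod_mul_distrib, ← Finset.prod_coe_sort S (fun i => p i / (1 - p i))]
    exact Finset.prod_congr rfl fun i _ => Real.mul_self_sqrt (hgnn i.val)
  have hall : (∏ i, (1 - p i)) = (∏ i ∈ S, (1 - p i)) * ∏ i ∈ Sᶜ, (1 - p i) :=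
    (Finset.prod_mul_prod_compl S _).symm
  have hps : (∏ i ∈ S, (1 - p i)) * (∏ i ∈ S, p i / (1 - p i)) = ∏ i ∈ S, p i := by
    rw [← Finset.prod_mul_distrib]
    exact Finset.prod_congr rfl fun i _ => by
      field_simp [ne_of_gt (hone i)]
  rw [hall, ← hdet2, ← hps, ← hsqrt]
  ring
end

section
/- Let K and D be n×n positive semidefinite matrices with all eigenvalues in [0,1], with D diagonal. If T ∼ DPP_cor(K) and R ∼ DPP_cor(D) are independent, then T ∪ R ∼ DPP_cor(D + (I−D)^{1/2} K (I−D)^{1/2}). Equivalently, for every subset A ⊆ [n], Pr(A ⊆ T ∪ R) = det([D + (I−D)^{1/2} K (I−D)^{1/2}]_{A,A}). -/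
open Matrix MeasureTheory ProbabilityTheory BigOperators

noncomputable instance finsetMeasurableSpace (n : ℕ) : MeasurableSpace (Finset (Fin n)) := ⊤

/-!
Condition on `T = t`: then `A ⊆ T ∪ R` is the event `A \ t ⊆ R`, of probability
`∏_{i ∈ A \ t} dᵢ = ∏_{i ∈ A} (dᵢ + (1 - dᵢ)·[i ∈ t])`. Expanding this product over the subsets
`B ⊆ A` and averaging over `t` gives
`Pr(A ⊆ T ∪ R) = ∑_{B ⊆ A} ∏_{A \ B} dᵢ · ∏_B (1 - dᵢ) · det K_B`.
On the matrix side, multilinearity of the determinant in the rows expands the principal minor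
`det (D + E K E)_A` (with `E = (I - D)^{1/2}`) as `∑_{B ⊆ A} ∏_{A \ B} dᵢ · det (E K E)_B`, and
`det (E K E)_B = ∏_B (1 - dᵢ) · det K_B`.
-/

open Finset

namespace Matrix

variable {ι κ R : Type*} [DecidableEq ι] [DecidableEq κ] [CommRing R]

def principalMinor (M : Matrix ι ι R) (s : Finset ι) : R :=
  (M.submatrix (Subtype.val : {i // i ∈ s} → ι) Subtype.val).det

theorem principalMinor_diagonal (d : ι → R) (s : Finset ι) :
    principalMinor (diagonal d) s = ∏ i ∈ s, d i := by
  rw [principalMinor, submatrix_diagonal d _ Subtype.val_injective, det_diagonal]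
  exact prod_coe_sort s d

theorem principalMinor_submatrix (f : κ ↪ ι) (M : Matrix ι ι R) (s : Finset κ) :
    principalMinor (M.submatrix f f) s = principalMinor M (s.map f) := by
  rw [principalMinor, principalMinor, ← det_submatrix_equiv_self (equivMap f s)]
  rfl

section Fintype

variable [Fintype ι]

theorem principalMinor_diagonal_mul_mul_diagonal (a b : ι → R) (M : Matrix ι ι R)
    (s : Finset ι) :
    principalMinor (diagonal a * M * diagonal b) s =
      (∏ i ∈ s, a i) * (∏ i ∈ s, b i) * principalMinor M s := by
  have hsub : (diagonal a * M * diagonal b).submatrix (Subtype.val : {i // i ∈ s} → ι)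
      Subtype.val = diagonal (fun i : s => a i) * M.submatrix Subtype.val Subtype.val *
        diagonal (fun i : s => b i) := by
    ext x y
    simp [mul_diagonal, diagonal_mul]
  rw [principalMinor, hsub, det_mul, det_mul, det_diagonal, det_diagonal, prod_coe_sort,
    prod_coe_sort, principalMinor]
  ring

theorem det_piecewise_diagonal (M : Matrix ι ι R) (d : ι → R) (s : Finset ι) :
    det (s.piecewise M (diagonal d)) = (∏ i ∈ sᶜ, d i) * principalMinor M s := by
  have hlower : ∀ i, i ∉ s → ∀ j, j ∈ s → s.piecewise M (diagonal d) i j = 0 :=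
    fun i hi j hj => by
      simp only [piecewise, if_neg hi, diagonal_apply_ne d (ne_of_mem_of_not_mem hj hi).symm]
  have hupper : toSquareBlockProp (s.piecewise M (diagonal d)) (· ∈ s) =
      M.submatrix Subtype.val Subtype.val := by
    ext x y
    exact congrFun (piecewise_eq_of_mem s M (diagonal d) x.2) y
  have hdiag : toSquareBlockProp (s.piecewise M (diagonal d)) (· ∉ s) =
      diagonal (fun i : {i // i ∉ s} => d i) := by
    ext x y
    refine (congrFun (piecewise_eq_of_notMem s M (diagonal d) x.2) y).trans ?_
    simp only [diagonal_apply, Subtype.ext_iff]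
  rw [twoBlockTriangular_det _ (· ∈ s) hlower, hupper, hdiag, det_diagonal, mul_comm,
    principalMinor, prod_subtype sᶜ (fun _ => mem_compl) d]
  congr!

theorem det_diagonal_add (d : ι → R) (M : Matrix ι ι R) :
    det (diagonal d + M) = ∑ s : Finset ι, (∏ i ∈ sᶜ, d i) * principalMinor M s := by
  rw [add_comm]
  exact ((detRowAlternating : (ι → R) [⋀^ι]→ₗ[R] R).toMultilinearMap.map_add_univ M
    (diagonal d)).trans (sum_congr rfl fun s _ => det_piecewise_diagonal M d s)

end Fintype

theorem principalMinor_diagonal_add (d : ι → R) (M : Matrix ι ι R) (A : Finset ι) :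
    principalMinor (diagonal d + M) A =
      ∑ B ∈ A.powerset, (∏ i ∈ A \ B, d i) * principalMinor M B := by
  have hsub : (diagonal d + M).submatrix (Subtype.val : {i // i ∈ A} → ι) Subtype.val =
      diagonal (fun i : A => d i) + M.submatrix Subtype.val Subtype.val := by
    ext x y
    simp only [submatrix_apply, add_apply, diagonal_apply, Subtype.ext_iff]
  rw [principalMinor, hsub, det_diagonal_add]
  refine sum_nbij (·.map (Function.Embedding.subtype _)) (fun s _ => mem_powerset.2 ?_)
    (Finset.map_injective _).injOn (fun B hB => ⟨B.subtype (· ∈ A), mem_coe.2 (mem_univ _),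
      subtype_map_of_mem (mem_powerset.1 hB)⟩) fun s _ => ?_
  · intro x hx
    obtain ⟨y, -, rfl⟩ := mem_map.1 hx
    exact y.2
  · have hcompl : sᶜ.map (Function.Embedding.subtype (· ∈ A)) =
        A \ s.map (Function.Embedding.subtype _) := by
      rw [compl_eq_univ_sdiff, Finset.map_sdiff, univ_eq_attach, attach_map_val]
    rw [← hcompl, prod_map]
    exact congrArg _ (principalMinor_submatrix (Function.Embedding.subtype _) M s)

end Matrix

theorem Finset.prod_sdiff_eq_sum_powerset {α R : Type*} [DecidableEq α] [CommRing R]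
    (d : α → R) (A t : Finset α) :
    ∏ i ∈ A \ t, d i =
      ∑ B ∈ A.powerset, if B ⊆ t then (∏ i ∈ A \ B, d i) * ∏ i ∈ B, (1 - d i) else 0 := by
  calc ∏ i ∈ A \ t, d i = ∏ i ∈ A, ((if i ∈ t then 1 - d i else 0) + d i) := by
        rw [sdiff_eq_filter, prod_filter]
        exact prod_congr rfl fun i _ => by split_ifs <;> ring
    _ = ∑ B ∈ A.powerset, (∏ i ∈ B, if i ∈ t then 1 - d i else 0) * ∏ i ∈ A \ B, d i :=
        prod_add _ _ _
    _ = _ := sum_congr rfl fun B _ => by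
        by_cases hB : B ⊆ t
        · rw [prod_ite_zero, if_pos (show ∀ i ∈ B, i ∈ t from hB), if_pos hB, mul_comm]
        · rw [prod_ite_zero, if_neg (show ¬∀ i ∈ B, i ∈ t from hB), if_neg hB, zero_mul]

section Probability

variable {Ω : Type*} [MeasurableSpace Ω] {μ : Measure Ω} [IsFiniteMeasure μ]

theorem measureReal_setOf_eq_sum_of_indepFun {β γ : Type*} [Fintype β] [MeasurableSpace β]
    [MeasurableSingletonClass β] [MeasurableSpace γ] {X : Ω → β} {Y : Ω → γ}
    (hX : Measurable X) (hY : Measurable Y) (hXY : IndepFun X Y μ) (P : β → γ → Prop)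
    (hP : ∀ x, MeasurableSet {y | P x y}) :
    μ.real {ω | P (X ω) (Y ω)} = ∑ x, μ.real (X ⁻¹' {x}) * μ.real {ω | P x (Y ω)} := by
  have hunion : {ω | P (X ω) (Y ω)} = ⋃ x ∈ (univ : Finset β), X ⁻¹' {x} ∩ Y ⁻¹' {y | P x y} := by
    ext ω
    simp
  have hdisj : Set.PairwiseDisjoint (univ : Finset β) fun x => X ⁻¹' {x} ∩ Y ⁻¹' {y | P x y} :=
    fun x _ x' _ hne => Set.disjoint_left.2 fun ω h h' => hne (h.1.symm.trans h'.1)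
  rw [hunion, measureReal_biUnion_finset hdisj
    fun x _ => (hX (measurableSet_singleton x)).inter (hY (hP x))]
  refine sum_congr rfl fun x _ => ?_
  simp only [measureReal_def,
    hXY.measure_inter_preimage_eq_mul _ _ (measurableSet_singleton x) (hP x), ENNReal.toReal_mul]
  rfl

variable {α : Type*} [Fintype α] [DecidableEq α] [MeasurableSpace (Finset α)]
  [DiscreteMeasurableSpace (Finset α)]

theorem measureReal_subset_eq_sum_fiber {T : Ω → Finset α} (hT : Measurable T) (B : Finset α) :
    μ.real {ω | B ⊆ T ω} = ∑ t, if B ⊆ t then μ.real (T ⁻¹' {t}) else 0 := by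
  rw [← sum_filter, sum_measureReal_preimage_singleton _ fun t _ => hT (.of_discrete)]
  congr 1
  ext ω
  simp

theorem measureReal_subset_union_eq_sum {T R : Ω → Finset α} (hT : Measurable T)
    (hR : Measurable R) (hTR : IndepFun T R μ) (d : α → ℝ)
    (hRd : ∀ S, μ.real {ω | S ⊆ R ω} = ∏ i ∈ S, d i) (A : Finset α) :
    μ.real {ω | A ⊆ T ω ∪ R ω} =
      ∑ B ∈ A.powerset, (∏ i ∈ A \ B, d i) * (∏ i ∈ B, (1 - d i)) * μ.real {ω | B ⊆ T ω} := by
  calc μ.real {ω | A ⊆ T ω ∪ R ω}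
      = ∑ t, μ.real (T ⁻¹' {t}) * μ.real {ω | A \ t ⊆ R ω} := by
        rw [show {ω | A ⊆ T ω ∪ R ω} = {ω | A \ T ω ⊆ R ω} from
          Set.ext fun ω => (sdiff_le_iff (a := A) (b := T ω) (c := R ω)).symm]
        exact measureReal_setOf_eq_sum_of_indepFun hT hR hTR (fun t r => A \ t ⊆ r)
          fun _ => .of_discrete
    _ = ∑ t, μ.real (T ⁻¹' {t}) * ∑ B ∈ A.powerset,
          if B ⊆ t then (∏ i ∈ A \ B, d i) * ∏ i ∈ B, (1 - d i) else 0 :=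
        sum_congr rfl fun t _ => by rw [hRd, prod_sdiff_eq_sum_powerset]
    _ = _ := by
        simp_rw [mul_sum]
        rw [sum_comm]
        refine sum_congr rfl fun B _ => ?_
        rw [measureReal_subset_eq_sum_fiber hT, mul_sum]
        exact sum_congr rfl fun t _ => by split_ifs <;> ring

end Probability

instance finsetDiscreteMeasurableSpace (n : ℕ) : DiscreteMeasurableSpace (Finset (Fin n)) :=
  ⟨fun _ => MeasurableSpace.measurableSet_top⟩

theorem dpp_union_bernoulli_general
    (n : ℕ) (Ω : Type*) [MeasurableSpace Ω] (μ : Measure Ω) [IsProbabilityMeasure μ]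
    (K : Matrix (Fin n) (Fin n) ℝ)
    (dvec : Fin n → ℝ) (hd : ∀ i, dvec i ∈ Set.Icc (0 : ℝ) 1)
    (T R : Ω → Finset (Fin n)) (hTmeas : Measurable T) (hRmeas : Measurable R)
    (hTR : IndepFun T R μ)
    (hT : ∀ A : Finset (Fin n),
      (μ {ω | A ⊆ T ω}).toReal =
        (K.submatrix (Subtype.val : {i // i ∈ A} → Fin n) Subtype.val).det)
    (hR : ∀ A : Finset (Fin n),
      (μ {ω | A ⊆ R ω}).toReal =
        ((Matrix.diagonal dvec).submatrix
          (Subtype.val : {i // i ∈ A} → Fin n) Subtype.val).det) :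
    ∀ A : Finset (Fin n),
      (μ {ω | A ⊆ T ω ∪ R ω}).toReal =
        ((Matrix.diagonal dvec +
            Matrix.diagonal (fun i => Real.sqrt (1 - dvec i)) * K *
              Matrix.diagonal (fun i => Real.sqrt (1 - dvec i))).submatrix
          (Subtype.val : {i // i ∈ A} → Fin n) Subtype.val).det := by
  intro A
  have hRd : ∀ S, μ.real {ω | S ⊆ R ω} = ∏ i ∈ S, dvec i :=
    fun S => (hR S).trans (principalMinor_diagonal dvec S)
  have hsqrt : ∀ i, √(1 - dvec i) * √(1 - dvec i) = 1 - dvec i :=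
    fun i => Real.mul_self_sqrt (sub_nonneg.2 (hd i).2)
  change μ.real _ = principalMinor _ A
  rw [measureReal_subset_union_eq_sum hTmeas hRmeas hTR dvec hRd A, principalMinor_diagonal_add]
  refine sum_congr rfl fun B _ => ?_
  rw [principalMinor_diagonal_mul_mul_diagonal, ← prod_mul_distrib,
    prod_congr rfl fun i _ => hsqrt i, show μ.real {ω | B ⊆ T ω} = principalMinor K B from hT B]
  ring

/-- Combining an independent pair of determinantal point processes with
correlation kernels `K` and diagonal `D` (eigenvalues in `[0,1]`) by taking the
union gives a DPP with correlation kernel `D + (I-D)^{1/2} K (I-D)^{1/2}`. -/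
theorem dpp_union_bernoulli
    (n : ℕ) (Ω : Type*) [MeasurableSpace Ω] (μ : Measure Ω) [IsProbabilityMeasure μ]
    (K : Matrix (Fin n) (Fin n) ℝ) (hK : K.PosSemidef) (hK1 : (1 - K).PosSemidef)
    (dvec : Fin n → ℝ) (hd : ∀ i, dvec i ∈ Set.Icc (0 : ℝ) 1)
    (T R : Ω → Finset (Fin n)) (hTmeas : Measurable T) (hRmeas : Measurable R)
    (hTR : IndepFun T R μ)
    (hT : ∀ A : Finset (Fin n),
      (μ {ω | A ⊆ T ω}).toReal =
        (K.submatrix (Subtype.val : {i // i ∈ A} → Fin n) Subtype.val).det)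
    (hR : ∀ A : Finset (Fin n),
      (μ {ω | A ⊆ R ω}).toReal =
        ((Matrix.diagonal dvec).submatrix
          (Subtype.val : {i // i ∈ A} → Fin n) Subtype.val).det) :
    ∀ A : Finset (Fin n),
      (μ {ω | A ⊆ T ω ∪ R ω}).toReal =
        ((Matrix.diagonal dvec +
            Matrix.diagonal (fun i => Real.sqrt (1 - dvec i)) * K *
              Matrix.diagonal (fun i => Real.sqrt (1 - dvec i))).submatrix
          (Subtype.val : {i // i ∈ A} → Fin n) Subtype.val).det :=
  dpp_union_bernoulli_general n Ω μ K dvec hd T R hTmeas hRmeas hTR hT hR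
end

section
/- For any square matrix M and any subset A of its index set, det(M_{A,A} + I_{A,A}) = ∑_{B ⊆ A} det(M_{B,B}), where the sum is over all subsets B of A (with det of the empty matrix equal to 1). -/
open Matrix BigOperators

lemma det_piecewise_one {ι : Type*} [Fintype ι] [DecidableEq ι]
    (N : Matrix ι ι ℝ) (s : Finset ι) :
    (Matrix.of (s.piecewise N (1 : Matrix ι ι ℝ))).det
      = (N.submatrix (Subtype.val : {i // i ∈ s} → ι) Subtype.val).det := by
  have hz : ∀ i, ¬ ((· ∈ s) i) → ∀ j, (· ∈ s) j →
      Matrix.of (s.piecewise N (1 : Matrix ι ι ℝ)) i j = 0 := by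
    intro i hi j hj
    simp only [Matrix.of_apply, Finset.piecewise, if_neg hi]
    exact Matrix.one_apply_ne (fun h => hi (h ▸ hj))
  refine (Matrix.twoBlockTriangular_det _ (· ∈ s) hz).trans ?_
  have h1 : ((Matrix.of (s.piecewise N (1 : Matrix ι ι ℝ))).toSquareBlockProp
      fun x => x ∈ s) = N.submatrix (Subtype.val : {i // i ∈ s} → ι) Subtype.val := by
    ext i j
    simp [Matrix.toSquareBlockProp, Finset.piecewise, i.2]
  have h2 : ((Matrix.of (s.piecewise N (1 : Matrix ι ι ℝ))).toSquareBlockProp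
      fun i => i ∉ s) = 1 := by
    ext i j
    rcases eq_or_ne i j with rfl | hij
    · simp [Matrix.toSquareBlockProp, Finset.piecewise, i.2]
    · have hne : (i : ι) ≠ (j : ι) := fun h => hij (Subtype.ext h)
      simp [Matrix.toSquareBlockProp, Finset.piecewise, i.2, Matrix.one_apply, hne, hij]
  rw [h1, h2, Matrix.det_one, mul_one]
  congr!

lemma det_add_one_general {ι : Type*} [Fintype ι] [DecidableEq ι]
    (N : Matrix ι ι ℝ) :
    (N + 1).det = ∑ s ∈ (Finset.univ : Finset ι).powerset,
      (N.submatrix (Subtype.val : {i // i ∈ s} → ι) Subtype.val).det := by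
  have h := (Matrix.detRowAlternating :
      AlternatingMap ℝ (ι → ℝ) ℝ ι).toMultilinearMap.map_piecewise_add
      (fun i => N i) (fun i => (1 : Matrix ι ι ℝ) i) Finset.univ
  simp only [Finset.piecewise_univ] at h
  have hL : (N + 1).det = (Matrix.detRowAlternating :
      AlternatingMap ℝ (ι → ℝ) ℝ ι) ((fun i => N i) + fun i => (1 : Matrix ι ι ℝ) i) := rfl
  refine hL.trans (h.trans ?_)
  refine Finset.sum_congr rfl fun s _ => ?_
  exact det_piecewise_one N s

/-- L-ensemble partition function identity: for any square matrix `M` and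
subset `A` of its index set, `det(M_{A,A} + I) = ∑ B ⊆ A, det(M_{B,B})`. -/
theorem det_add_one_eq_sum_subsets
    (n : ℕ) (M : Matrix (Fin n) (Fin n) ℝ) (A : Finset (Fin n)) :
    (M.submatrix (Subtype.val : {i // i ∈ A} → Fin n) Subtype.val + 1).det
      = ∑ B ∈ A.powerset,
          (M.submatrix (Subtype.val : {i // i ∈ B} → Fin n) Subtype.val).det := by
  rw [det_add_one_general]
  refine Finset.sum_bij' (fun s _ => s.map (Function.Embedding.subtype (· ∈ A)))
    (fun B _ => Finset.univ.filter (fun x : {i // i ∈ A} => x.1 ∈ B))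
    (fun s _ => ?_) (fun B _ => ?_) (fun s _ => ?_) (fun B hB => ?_) (fun s _ => ?_)
  · rw [Finset.mem_powerset]
    intro i hi
    simp only [Finset.mem_map, Function.Embedding.coe_subtype] at hi
    obtain ⟨x, _, rfl⟩ := hi
    exact x.2
  · exact Finset.mem_powerset.2 (Finset.subset_univ _)
  · ext x
    simp
  · rw [Finset.mem_powerset] at hB
    ext i
    simp only [Finset.mem_map, Finset.mem_filter, Finset.mem_univ, true_and,
      Function.Embedding.coe_subtype]
    constructor
    · rintro ⟨x, hx, rfl⟩; exact hx
    · intro hi; exact ⟨⟨i, hB hi⟩, hi, rfl⟩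
  · -- determinant equality
    have hmem : ∀ x : {i // i ∈ A}, x ∈ s →
        x.1 ∈ s.map (Function.Embedding.subtype (· ∈ A)) := by
      intro x hx
      exact Finset.mem_map_of_mem _ hx
    have hmem' : ∀ i : Fin n, i ∈ s.map (Function.Embedding.subtype (· ∈ A)) →
        ∃ h : i ∈ A, (⟨i, h⟩ : {i // i ∈ A}) ∈ s := by
      intro i hi
      simp only [Finset.mem_map, Function.Embedding.coe_subtype] at hi
      obtain ⟨x, hx, rfl⟩ := hi
      exact ⟨x.2, hx⟩
    let e : {x : {i // i ∈ A} // x ∈ s} ≃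
        {i // i ∈ s.map (Function.Embedding.subtype (· ∈ A))} :=
      { toFun := fun x => ⟨x.1.1, hmem x.1 x.2⟩
        invFun := fun i => ⟨⟨i.1, (hmem' i.1 i.2).1⟩, (hmem' i.1 i.2).2⟩
        left_inv := fun x => by ext; rfl
        right_inv := fun i => by ext; rfl }
    rw [← Matrix.det_submatrix_equiv_self e
      (M.submatrix (Subtype.val :
        {i // i ∈ s.map (Function.Embedding.subtype (· ∈ A))} → Fin n) Subtype.val)]
    rfl
end

section
/- Under the regularized DPP distribution with psd matrix A and weights p (so that ∑_i p_i x_i x_iᵀ + A is invertible), E[det(X_Sᵀ X_S + A)^{-1}] ≤ det(∑_i p_i x_i x_iᵀ + A)^{-1}, where the expectation is restricted to subsets S for which X_Sᵀ X_S + A is invertible (assigning 0 otherwise). -/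
open Matrix BigOperators

/-!
Weighting `S` by `det(X_Sᵀ X_S + A)` and then multiplying by `det(X_Sᵀ X_S + A)⁻¹` cancels
whenever the determinant is nonzero and gives `0` otherwise, so the expectation is at most
`∑_S Pr_p(S) / det(∑ pᵢ xᵢxᵢᵀ + A)`, where `Pr_p` is the product Bernoulli measure, of total
mass `∏ (pᵢ + (1 - pᵢ)) = 1`. The denominator is the determinant of a positive semidefinite
matrix, hence nonnegative, which is what makes each dropped term nonnegative.
-/

lemma mul_mul_inv_le_of_nonneg {K : Type*} [Field K] [LinearOrder K] [IsStrictOrderedRing K]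
    (a : K) {c : K} (hc : 0 ≤ c) : a * c * a⁻¹ ≤ c := by
  rcases eq_or_ne a 0 with rfl | ha
  · simpa using hc
  · rw [mul_comm a c, mul_inv_cancel_right₀ ha]

section BernoulliWeights

variable {ι R : Type*} [Fintype ι] [CommRing R]

lemma Finset.sum_prod_mul_prod_compl_one_sub [DecidableEq ι] (p : ι → R) :
    ∑ S : Finset ι, (∏ i ∈ S, p i) * ∏ i ∈ Sᶜ, (1 - p i) = 1 := by
  rw [← Fintype.prod_add]
  simp

lemma Finset.prod_mul_prod_compl_one_sub_nonneg [DecidableEq ι] [PartialOrder R]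
    [IsOrderedRing R] {p : ι → R} (hp : ∀ i, p i ∈ Set.Icc (0 : R) 1) (S : Finset ι) :
    0 ≤ (∏ i ∈ S, p i) * ∏ i ∈ Sᶜ, (1 - p i) :=
  mul_nonneg (Finset.prod_nonneg fun i _ => (hp i).1)
    (Finset.prod_nonneg fun i _ => sub_nonneg.mpr (hp i).2)

end BernoulliWeights

lemma Matrix.posSemidef_sum_smul_vecMulVec_self {ι n R : Type*} [Fintype ι] [Fintype n]
    [CommRing R] [PartialOrder R] [StarRing R] [TrivialStar R]
    [StarOrderedRing R] {p : ι → R} (hp : ∀ i, 0 ≤ p i) (x : ι → n → R) :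
    (∑ i, p i • vecMulVec (x i) (x i)).PosSemidef :=
  posSemidef_sum _ fun i _ => by
    simpa using (posSemidef_vecMulVec_self_star (x i)).smul (hp i)

theorem regularized_dpp_expected_inverse_det_general
    (n d : ℕ) (x : Fin n → (Fin d → ℝ)) (p : Fin n → ℝ)
    (hp : ∀ i, p i ∈ Set.Icc (0 : ℝ) 1)
    (A : Matrix (Fin d) (Fin d) ℝ) (hA : A.PosSemidef) :
    ∑ S : Finset (Fin n),
        (((∑ i ∈ S, vecMulVec (x i) (x i)) + A).det *
            ((∏ i ∈ S, p i) * ∏ i ∈ Sᶜ, (1 - p i)) /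
              (∑ i, p i • vecMulVec (x i) (x i) + A).det) *
          (((∑ i ∈ S, vecMulVec (x i) (x i)) + A).det)⁻¹
      ≤ ((∑ i, p i • vecMulVec (x i) (x i) + A).det)⁻¹ := by
  have hD : 0 ≤ (∑ i, p i • vecMulVec (x i) (x i) + A).det :=
    ((posSemidef_sum_smul_vecMulVec_self (fun i => (hp i).1) x).add hA).det_nonneg
  calc _ ≤ ∑ S : Finset (Fin n),
          (∏ i ∈ S, p i) * (∏ i ∈ Sᶜ, (1 - p i)) / (∑ i, p i • vecMulVec (x i) (x i) + A).det :=
        Finset.sum_le_sum fun S _ => by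
          rw [mul_div_assoc]
          exact mul_mul_inv_le_of_nonneg _
            (div_nonneg (Finset.prod_mul_prod_compl_one_sub_nonneg hp S) hD)
    _ = _ := by rw [← Finset.sum_div, Finset.sum_prod_mul_prod_compl_one_sub, one_div]

/-- Expectation of the inverse determinant under the regularized DPP (with the
convention that `(det M)⁻¹ = 0` when `M` is not invertible):
`E[det(X_Sᵀ X_S + A)⁻¹] ≤ det(∑ i, p i • x i x iᵀ + A)⁻¹`. -/
theorem regularized_dpp_expected_inverse_det
    (n d : ℕ) (x : Fin n → (Fin d → ℝ)) (p : Fin n → ℝ)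
    (hp : ∀ i, p i ∈ Set.Icc (0 : ℝ) 1)
    (A : Matrix (Fin d) (Fin d) ℝ) (hA : A.PosSemidef)
    (hinv : IsUnit (∑ i, p i • vecMulVec (x i) (x i) + A).det) :
    ∑ S : Finset (Fin n),
        (((∑ i ∈ S, vecMulVec (x i) (x i)) + A).det *
            ((∏ i ∈ S, p i) * ∏ i ∈ Sᶜ, (1 - p i)) /
              (∑ i, p i • vecMulVec (x i) (x i) + A).det) *
          (((∑ i ∈ S, vecMulVec (x i) (x i)) + A).det)⁻¹
      ≤ ((∑ i, p i • vecMulVec (x i) (x i) + A).det)⁻¹ :=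
  regularized_dpp_expected_inverse_det_general n d x p hp A hA
end

section
/- For independent Bernoulli random variables b_1,...,b_n, vectors x_i ∈ R^d and a psd matrix A such that ∑_i E[b_i] x_i x_iᵀ + A is invertible, the expected adjugate satisfies E[adj(∑_i b_i x_i x_iᵀ + A)] = adj(∑_i E[b_i] x_i x_iᵀ + A), where adj denotes the classical adjugate matrix. -/
/-!
A rank-one perturbation moves the adjugate affinely:
`adj (M + t • u vᵀ) = (1 - t) • adj M + t • adj (M + u vᵀ)`. For the determinant this is seen by
bordering `N + t • u vᵀ` into the block matrix `[[N, -u], [t • vᵀ, 1]]`, which has the same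
determinant (Schur complement of the `1`) and depends on `t` through a single row; the adjugate
follows entrywise, its entries being determinants of row-updated matrices. So the adjugate is
affine in each Bernoulli variable separately, and averaging over independent `b i` one index at a
time replaces each `b i` by its mean `p i`.
-/

open Matrix BigOperators

namespace Matrix

theorem updateRow_add_smul_vecMulVec {m R : Type*} [DecidableEq m] [Semiring R]
    (M : Matrix m m R) (u v : m → R) (t : R) (j : m) (w : m → R) :
    (M + t • vecMulVec u v).updateRow j w
      = M.updateRow j w + t • vecMulVec (Function.update u j 0) v := by
  ext i k
  by_cases h : i = j
  · subst h; simp [vecMulVec_apply]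
  · simp [updateRow_ne h, Function.update_of_ne h, vecMulVec_apply]

variable {m R : Type*} [Fintype m] [DecidableEq m] [CommRing R]

theorem det_add_smul_vecMulVec_eq_bordered (N : Matrix m m R) (u v : m → R) (t : R) :
    (N + t • vecMulVec u v).det
      = N.det + t * (fromBlocks N (-replicateCol Unit u) (replicateRow Unit v) 0).det := by
  set B := -replicateCol Unit u
  set C := replicateRow Unit v
  have hrow : fromBlocks N B (t • C) 1 = (fromBlocks N B 0 1).updateRow (.inr ())
      (fromBlocks N B 0 1 (.inr ()) + t • fromBlocks N B C 0 (.inr ())) := by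
    ext (i | i) (j | j) <;> simp [updateRow_apply, B, C]
  have hlast : (fromBlocks N B 0 1).updateRow (.inr ()) (fromBlocks N B C 0 (.inr ()))
      = fromBlocks N B C 0 := by
    ext (i | i) (j | j) <;> simp [updateRow_apply, B, C]
  calc (N + t • vecMulVec u v).det = (fromBlocks N B (t • C) 1).det := by
        rw [det_fromBlocks_one₂₂, vecMulVec_eq Unit]
        simp [B, C, Matrix.mul_smul]
    _ = N.det + t * (fromBlocks N B C 0).det := by
        rw [hrow, det_updateRow_add, det_updateRow_smul, updateRow_eq_self, hlast,
          det_fromBlocks_zero₂₁, det_one, mul_one]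

theorem det_add_smul_vecMulVec (N : Matrix m m R) (u v : m → R) (t : R) :
    (N + t • vecMulVec u v).det = (1 - t) * N.det + t * (N + vecMulVec u v).det := by
  have hone := det_add_smul_vecMulVec_eq_bordered N u v 1
  rw [one_smul] at hone
  rw [det_add_smul_vecMulVec_eq_bordered, hone]
  ring

theorem adjugate_add_smul_vecMulVec (M : Matrix m m R) (u v : m → R) (t : R) :
    (M + t • vecMulVec u v).adjugate
      = (1 - t) • M.adjugate + t • (M + vecMulVec u v).adjugate := by
  ext i j
  have hone : M + vecMulVec u v = M + (1 : R) • vecMulVec u v := by rw [one_smul]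
  simp only [adjugate_apply, add_apply, smul_apply, smul_eq_mul]
  rw [hone, updateRow_add_smul_vecMulVec, updateRow_add_smul_vecMulVec, one_smul,
    det_add_smul_vecMulVec]

end Matrix

theorem sum_bernoulli_smul_eq_of_affine {R V W : Type*} [CommRing R] [AddCommGroup V]
    [Module R V] [AddCommGroup W] [Module R W] (F : V → W) {n : ℕ} (y : Fin n → V)
    (hF : ∀ i z (t : R), F (z + t • y i) = (1 - t) • F z + t • F (z + y i))
    (p : Fin n → R) (a : V) :
    ∑ b : Fin n → Bool, (∏ i, if b i then p i else 1 - p i) •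
        F (∑ i, (if b i then (1 : R) else 0) • y i + a)
      = F (∑ i, p i • y i + a) := by
  induction n generalizing a with
  | zero => simp
  | succ n ih =>
    rw [← (Fin.consEquiv fun _ => Bool).sum_comp, Fintype.sum_prod_type, Fintype.sum_bool]
    simp only [Fin.consEquiv_apply, Fin.prod_univ_succ, Fin.sum_univ_succ, Fin.cons_zero,
      Fin.cons_succ, if_true, Bool.false_eq_true, if_false, one_smul, zero_smul, zero_add,
      mul_smul, ← Finset.smul_sum]
    have hshift (c S : V) : c + S + a = S + (a + c) := by abel
    simp only [hshift (y 0), hshift (p 0 • y 0),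
      ih (fun i => y i.succ) (fun i => hF i.succ) (fun i => p i.succ)]
    rw [← add_assoc _ a (p 0 • y 0), hF 0, add_comm, add_assoc]

theorem bernoulli_expectation_adjugate_general
    (n d : ℕ) (x : Fin n → (Fin d → ℝ)) (p : Fin n → ℝ)
    (A : Matrix (Fin d) (Fin d) ℝ) :
    ∑ b : Fin n → Bool,
        (∏ i, (if b i then p i else 1 - p i)) •
          (∑ i, (if b i then (1 : ℝ) else 0) • vecMulVec (x i) (x i) + A).adjugate
      = (∑ i, p i • vecMulVec (x i) (x i) + A).adjugate :=
  sum_bernoulli_smul_eq_of_affine adjugate (fun i => vecMulVec (x i) (x i))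
    (fun i M t => adjugate_add_smul_vecMulVec M (x i) (x i) t) p A

/-- Expected adjugate over independent Bernoulli variables:
`E[adj(∑ i, b i • x i x iᵀ + A)] = adj(∑ i, p i • x i x iᵀ + A)`. -/
theorem bernoulli_expectation_adjugate
    (n d : ℕ) (x : Fin n → (Fin d → ℝ)) (p : Fin n → ℝ)
    (hp : ∀ i, p i ∈ Set.Icc (0 : ℝ) 1)
    (A : Matrix (Fin d) (Fin d) ℝ) (hA : A.PosSemidef)
    (hinv : IsUnit (∑ i, p i • vecMulVec (x i) (x i) + A).det) :
    ∑ b : Fin n → Bool,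
        (∏ i, (if b i then p i else 1 - p i)) •
          (∑ i, (if b i then (1 : ℝ) else 0) • vecMulVec (x i) (x i) + A).adjugate
      = (∑ i, p i • vecMulVec (x i) (x i) + A).adjugate :=
  bernoulli_expectation_adjugate_general n d x p A
end

section
/- The correlation kernel of the regularized DPP lies between 0 and I: for X ∈ R^{n×d}, p ∈ [0,1]^n, A psd with A + Xᵀ D_p X positive definite, the matrix K = D_p + (I−D_p)^{1/2} D_p^{1/2} X (A + Xᵀ D_p X)^{-1} Xᵀ D_p^{1/2} (I−D_p)^{1/2} satisfies 0 ⪯ K ⪯ I. -/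
open Matrix

/-- The correlation kernel of the regularized DPP,
`K = D_p + (I-D_p)^{1/2} D_p^{1/2} X (A + Xᵀ D_p X)⁻¹ Xᵀ D_p^{1/2} (I-D_p)^{1/2}`,
satisfies `0 ⪯ K ⪯ I`. -/
theorem regularized_dpp_kernel_psd
    (n d : ℕ) (X : Matrix (Fin n) (Fin d) ℝ) (p : Fin n → ℝ)
    (hp : ∀ i, p i ∈ Set.Icc (0 : ℝ) 1)
    (A : Matrix (Fin d) (Fin d) ℝ) (hA : A.PosSemidef)
    (hZ : (A + Xᵀ * Matrix.diagonal p * X).PosDef)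
    (K : Matrix (Fin n) (Fin n) ℝ)
    (hK : K = Matrix.diagonal p +
        Matrix.diagonal (fun i => Real.sqrt (1 - p i)) *
          Matrix.diagonal (fun i => Real.sqrt (p i)) * X *
          (A + Xᵀ * Matrix.diagonal p * X)⁻¹ * Xᵀ *
          Matrix.diagonal (fun i => Real.sqrt (p i)) *
          Matrix.diagonal (fun i => Real.sqrt (1 - p i))) :
    K.PosSemidef ∧ (1 - K).PosSemidef := by
  set S : Matrix (Fin n) (Fin n) ℝ := Matrix.diagonal (fun i => Real.sqrt (p i)) with hS
  set T : Matrix (Fin n) (Fin n) ℝ := Matrix.diagonal (fun i => Real.sqrt (1 - p i)) with hT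
  set N : Matrix (Fin d) (Fin d) ℝ := A + Xᵀ * Matrix.diagonal p * X with hN
  set M : Matrix (Fin d) (Fin d) ℝ := N⁻¹ with hM
  set Y : Matrix (Fin n) (Fin d) ℝ := S * X with hY
  have hMpsd : M.PosSemidef := hZ.inv.posSemidef
  have hMsym : Mᵀ = M := hZ.inv.isHermitian
  have hMNM : M * N * M = M := by
    rw [hM, Matrix.nonsing_inv_mul _ (isUnit_iff_ne_zero.mpr hZ.det_pos.ne'),
      Matrix.one_mul]
  have hNM : N * M = 1 := by
    rw [hM]; exact Matrix.mul_nonsing_inv _ (isUnit_iff_ne_zero.mpr hZ.det_pos.ne')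
  clear_value M
  clear_value N
  clear_value Y
  have hSS : S * S = Matrix.diagonal p := by
    have hf : (fun i => Real.sqrt (p i) * Real.sqrt (p i)) = p :=
      funext fun i => Real.mul_self_sqrt (hp i).1
    rw [hS, diagonal_mul_diagonal, hf]
  have hTT : T * T = 1 - Matrix.diagonal p := by
    have hf : (fun i => Real.sqrt (1 - p i) * Real.sqrt (1 - p i)) = fun i => 1 - p i :=
      funext fun i => Real.mul_self_sqrt (by linarith [(hp i).2])
    rw [hT, diagonal_mul_diagonal, hf, ← diagonal_one, diagonal_sub]
  have hSt : Sᵀ = S := by rw [hS]; exact Matrix.diagonal_transpose _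
  have hTt : Tᵀ = T := by rw [hT]; exact Matrix.diagonal_transpose _
  have hYt : Yᵀ = Xᵀ * S := by rw [hY, Matrix.transpose_mul, hSt]
  have hNN : N = A + Yᵀ * Y := by
    rw [hYt, hY, hN]
    congr 1
    simp only [Matrix.mul_assoc]
    rw [← hSS]
    simp only [Matrix.mul_assoc]
  have hTYc : (T * Y)ᴴ = Yᵀ * T := by
    show (T * Y)ᵀ = Yᵀ * T
    rw [Matrix.transpose_mul, hTt]
  have hKeq : K = Matrix.diagonal p + (T * Y) * M * (T * Y)ᴴ := by
    rw [hK, hTYc, hYt, hY]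
    congr 1
    simp only [Matrix.mul_assoc]
  have hKpsd : K.PosSemidef := by
    rw [hKeq]
    exact (posSemidef_diagonal_iff.mpr fun i => (hp i).1).add
      (hMpsd.mul_mul_conjTranspose_same _)
  refine ⟨hKpsd, ?_⟩
  have hBc : (1 - Y * M * Yᵀ)ᴴ = 1 - Y * M * Yᵀ := by
    show (1 - Y * M * Yᵀ)ᵀ = _
    rw [Matrix.transpose_sub, Matrix.transpose_one, Matrix.transpose_mul,
      Matrix.transpose_mul, Matrix.transpose_transpose, hMsym, Matrix.mul_assoc]
  have hYMc : (Y * M)ᴴ = M * Yᵀ := by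
    show (Y * M)ᵀ = _
    rw [Matrix.transpose_mul, hMsym]
  have key : Y * M * Yᵀ * (Y * M * Yᵀ) + Y * M * A * (M * Yᵀ) = Y * M * Yᵀ := by
    have h2 : Y * M * N * (M * Yᵀ) = Y * M * Yᵀ := by
      have h3 : Y * (M * N * M) * Yᵀ = Y * M * Yᵀ := by rw [hMNM]
      rw [← h3]
      simp only [Matrix.mul_assoc]
    calc Y * M * Yᵀ * (Y * M * Yᵀ) + Y * M * A * (M * Yᵀ)
        = Y * M * (A + Yᵀ * Y) * (M * Yᵀ) := by
          simp only [Matrix.mul_add, Matrix.add_mul, Matrix.mul_assoc]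
          abel
    _ = Y * M * Yᵀ := by rw [← hNN]; exact h2
  have hC : (1 : Matrix (Fin n) (Fin n) ℝ) - Y * M * Yᵀ
      = (1 - Y * M * Yᵀ) * (1 - Y * M * Yᵀ)ᴴ + (Y * M) * A * (Y * M)ᴴ := by
    rw [hBc, hYMc]
    have expand : (1 - Y * M * Yᵀ) * (1 - Y * M * Yᵀ) + Y * M * A * (M * Yᵀ)
        = 1 - Y * M * Yᵀ - Y * M * Yᵀ
          + (Y * M * Yᵀ * (Y * M * Yᵀ) + Y * M * A * (M * Yᵀ)) := by
      have e1 : Y * M * A * (M * Yᵀ) = (Y * M * A * M) * Yᵀ := by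
        simp only [Matrix.mul_assoc]
      set B : Matrix (Fin n) (Fin n) ℝ := Y * M * Yᵀ
      rw [e1]
      set C : Matrix (Fin n) (Fin n) ℝ := Y * M * A * M * Yᵀ
      noncomm_ring
    rw [expand, key]
    abel
  have hCpsd : ((1 : Matrix (Fin n) (Fin n) ℝ) - Y * M * Yᵀ).PosSemidef := by
    rw [hC]
    exact (posSemidef_self_mul_conjTranspose _).add (hA.mul_mul_conjTranspose_same _)
  have hterm : (T * Y) * M * (T * Y)ᴴ = T * (Y * M * Yᵀ) * T := by
    rw [hTYc]
    simp only [Matrix.mul_assoc]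
  have h1K : 1 - K = T * (1 - Y * M * Yᵀ) * Tᴴ := by
    have hTc : Tᴴ = T := hTt
    rw [hKeq, hterm, hTc, Matrix.mul_sub, Matrix.sub_mul, Matrix.mul_one, hTT]
    abel
  rw [h1K]
  exact hCpsd.mul_mul_conjTranspose_same _
end
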